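/- arXiv:1007.2004 — 6 statements merged into one kernel-verified Lean document; each statement's English description precedes it below -/
import Mathlib

section
/- In the formal power series ring ℂ[[T,z]], the identity (∑_{n≥1} (A_n(T)/(1-T)^n) · z^n/n!) · (1 - T·e^z) = e^z - 1 holds, where e^z denotes the formal exponential. -/
/-!
Read the double series by powers of `T` rather than of `z`: the `T^m`-coefficient of the
Eulerian series is `e^{(m+1)z} - e^{mz} = e^{mz}(e^z - 1)`. Multiplying by `1 - T e^z` shifts
these coefficients by one power of `T` and multiplies them by `e^z`, so everything telescopes
except the `T^0`-coefficient `e^z - 1`.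
-/

open PowerSeries

namespace PowerSeries

variable {R : Type*}

section CommSemiring

variable [CommSemiring R]

noncomputable def innerCoeff (m : ℕ) : R⟦X⟧⟦X⟧ →+ R⟦X⟧ where
  toFun F := mk fun n => coeff m (coeff n F)
  map_zero' := by ext; simp
  map_add' F G := by ext; simp

@[simp]
theorem coeff_innerCoeff (m n : ℕ) (F : R⟦X⟧⟦X⟧) :
    coeff n (innerCoeff m F) = coeff m (coeff n F) :=
  coeff_mk n fun n => coeff m (coeff n F)

theorem ext_innerCoeff {F G : R⟦X⟧⟦X⟧} (h : ∀ m, innerCoeff m F = innerCoeff m G) : F = G := by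
  ext n m
  simpa using congr(coeff n $(h m))

theorem innerCoeff_map_C (m : ℕ) (g : R⟦X⟧) :
    innerCoeff m (map C g) = if m = 0 then g else 0 := by
  ext n
  split_ifs with hm <;> simp [coeff_C, hm]

theorem innerCoeff_mul_map_C (m : ℕ) (F : R⟦X⟧⟦X⟧) (g : R⟦X⟧) :
    innerCoeff m (F * map C g) = innerCoeff m F * g := by
  ext n
  rw [coeff_innerCoeff, coeff_mul, map_sum, coeff_mul]
  refine Finset.sum_congr rfl fun p _ => ?_
  rw [coeff_map, coeff_mul_C, coeff_innerCoeff]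

theorem innerCoeff_zero_C_X_mul (F : R⟦X⟧⟦X⟧) : innerCoeff 0 (C X * F) = 0 := by
  ext n
  simp [coeff_C_mul]

theorem innerCoeff_succ_C_X_mul (m : ℕ) (F : R⟦X⟧⟦X⟧) :
    innerCoeff (m + 1) (C X * F) = innerCoeff m F := by
  ext n
  simp [coeff_C_mul, coeff_succ_X_mul]

end CommSemiring

theorem coeff_one_sub_X_mul_mk_succ [CommRing R] (g : ℕ → R) (hg : g 0 = 0) (m : ℕ) :
    coeff m ((1 - X) * mk fun k => g (k + 1)) = g (m + 1) - g m := by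
  cases m <;> simp [sub_mul, coeff_succ_X_mul, hg]

theorem coeff_exp_pow {A : Type*} [CommRing A] [Algebra ℚ A] (m n : ℕ) :
    coeff n (exp A ^ m) = (m : A) ^ n * algebraMap ℚ A (1 / n.factorial) := by
  rw [exp_pow_eq_rescale_exp, coeff_rescale, coeff_exp]

section Field

variable {K : Type*} [Field K] [CharZero K]

theorem mk_C_inv_factorial_eq_map_exp :
    (mk fun n => C (n.factorial : K)⁻¹ : K⟦X⟧⟦X⟧) = map C (exp K) := by
  ext n : 1
  rw [coeff_mk, coeff_map, coeff_exp]
  simp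

noncomputable def eulerianGenSeries : K⟦X⟧⟦X⟧ :=
  mk fun n => if n = 0 then 0 else
    (n.factorial : K)⁻¹ • ((1 - X) * mk fun k => ((k : K) + 1) ^ n)

theorem innerCoeff_eulerianGenSeries (m : ℕ) :
    innerCoeff m (eulerianGenSeries : K⟦X⟧⟦X⟧) = exp K ^ m * (exp K - 1) := by
  ext n
  rw [mul_sub, mul_one, ← pow_succ, map_sub, coeff_exp_pow, coeff_exp_pow, coeff_innerCoeff,
    eulerianGenSeries, coeff_mk]
  split_ifs with hn
  · simp [hn]
  · have h : coeff m ((1 - X) * mk fun k => ((k : K) + 1) ^ n) =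
        ((m : K) + 1) ^ n - (m : K) ^ n := by
      simpa using coeff_one_sub_X_mul_mk_succ (fun k : ℕ => (k : K) ^ n) (by simp [hn]) m
    rw [map_smul, h, smul_eq_mul]
    simp only [Nat.cast_add, Nat.cast_one, one_div, map_inv₀, map_natCast]
    ring

end Field

end PowerSeries

/-- In `ℂ[[T]][[z]]` (representing `ℂ[[T,z]]`), with `A_n(T)/(1-T)^n` interpreted as
`(1-T)·∑_{k≥1} k^n T^{k-1}`, we have
`(∑_{n≥1} (A_n(T)/(1-T)^n) z^n/n!) · (1 - T·e^z) = e^z - 1`. -/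
theorem eulerian_genfun :
    (PowerSeries.mk (fun n => if n = 0 then 0 else
        ((n.factorial : ℂ)⁻¹) • ((1 - X) * PowerSeries.mk (fun k => ((k : ℂ) + 1) ^ n)))
        : PowerSeries (PowerSeries ℂ))
      * (1 - PowerSeries.C (R := PowerSeries ℂ) X
          * PowerSeries.mk (fun n => PowerSeries.C (R := ℂ) ((n.factorial : ℂ)⁻¹)))
    = PowerSeries.mk (fun n => PowerSeries.C (R := ℂ) ((n.factorial : ℂ)⁻¹)) - 1 := by
  change eulerianGenSeries * _ = _
  rw [show ∀ F G : ℂ⟦X⟧⟦X⟧, F * (1 - C X * G) = F - C X * (F * G) from fun _ _ => by ring,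
    mk_C_inv_factorial_eq_map_exp, ← map_one (map C), ← map_sub]
  refine ext_innerCoeff fun m => ?_
  rw [map_sub, innerCoeff_map_C, innerCoeff_eulerianGenSeries]
  cases m with
  | zero =>
    rw [innerCoeff_zero_C_X_mul, if_pos rfl]
    ring
  | succ m =>
    rw [innerCoeff_succ_C_X_mul, innerCoeff_mul_map_C, innerCoeff_eulerianGenSeries,
      if_neg m.succ_ne_zero]
    ring
end

section
/- In ℂ[T][[z]], the identity (∑_{n≥1} A_n(T) · z^n/n!) · (1 - T·e^{z(1-T)}) = e^{z(1-T)} - 1 holds. -/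
/-!
Shifting the index in `∑ₖ (k+1)ⁿ Tᵏ` and expanding `(k+2)ⁿ` binomially gives the recurrence
`Aₙ = (1-T)ⁿ⁺¹ + T ∑ᵢ C(n,i) Aᵢ (1-T)ⁿ⁻ⁱ`. Read coefficientwise in `z`, this is
`F · (1 - T·E) = (1-T) · E` for `F = ∑_{n≥0} Aₙ zⁿ/n!` and `E = e^{z(1-T)}`; since `A₀ = 1`,
subtracting `1 - T·E` from both sides gives the identity for `F - 1`.
-/

open PowerSeries Nat

theorem mk_add_one_pow_eq_one_add_X_mul_sum {R : Type*} [CommSemiring R] (n : ℕ) :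
    mk (fun k => ((k : R) + 1) ^ n) =
      1 + X * ∑ i ∈ Finset.range (n + 1), n.choose i • mk (fun k => ((k : R) + 1) ^ i) := by
  ext (_ | k)
  · simp
  · rw [map_add, coeff_succ_X_mul, map_sum, coeff_mk, coeff_one, if_neg k.succ_ne_zero, zero_add,
      cast_succ, add_pow]
    refine Finset.sum_congr rfl fun i _ => ?_
    rw [map_nsmul, coeff_mk, one_pow, mul_one, nsmul_eq_mul, mul_comm]

noncomputable def egf (K : Type*) {S : Type*} [Field K] [Semiring S] [Module K S] (a : ℕ → S) :
    PowerSeries S :=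
  mk fun n => (n ! : K)⁻¹ • a n

theorem coeff_egf_mul_egf {K S : Type*} [Field K] [CharZero K] [CommSemiring S] [Algebra K S]
    (a b : ℕ → S) (n : ℕ) :
    coeff n (egf K a * egf K b) =
      (n ! : K)⁻¹ • ∑ i ∈ Finset.range (n + 1), n.choose i • (a i * b (n - i)) := by
  rw [egf, egf, coeff_mul, Finset.Nat.sum_antidiagonal_eq_sum_range_succ_mk, Finset.smul_sum]
  refine Finset.sum_congr rfl fun i hi => ?_
  rw [coeff_mk, coeff_mk, smul_mul_smul_comm, ← Nat.cast_smul_eq_nsmul K, smul_smul,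
    Nat.cast_choose K (Finset.mem_range_succ_iff.mp hi), div_eq_mul_inv,
    inv_mul_cancel_left₀ (Nat.cast_ne_zero.mpr n.factorial_ne_zero), mul_inv]

section Eulerian

variable {R : Type*} [CommRing R] (A : ℕ → Polynomial R)

theorem eulerian_zero
    (hA : ∀ n, (A n : R⟦X⟧) = (1 - X) ^ (n + 1) * mk (fun k => ((k : R) + 1) ^ n)) :
    A 0 = 1 := by
  have hones : (fun k : ℕ => ((k : R) + 1) ^ 0) = 1 := funext fun _ => pow_zero _
  rw [← Polynomial.coe_inj, hA 0, hones, pow_one, mul_comm, mk_one_mul_one_sub_eq_one,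
    Polynomial.coe_one]

theorem eulerian_recurrence
    (hA : ∀ n, (A n : R⟦X⟧) = (1 - X) ^ (n + 1) * mk (fun k => ((k : R) + 1) ^ n)) (n : ℕ) :
    A n = (1 - Polynomial.X) ^ (n + 1) + Polynomial.X *
      ∑ i ∈ Finset.range (n + 1), n.choose i • (A i * (1 - Polynomial.X) ^ (n - i)) := by
  rw [← Polynomial.coe_inj]
  simp only [← Polynomial.coeToPowerSeries.ringHom_apply, map_add, map_mul, map_pow, map_sub,
    map_one, map_sum, map_nsmul]
  simp only [Polynomial.coeToPowerSeries.ringHom_apply, Polynomial.coe_X]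
  rw [hA n, mk_add_one_pow_eq_one_add_X_mul_sum, mul_add, mul_one, mul_left_comm, Finset.mul_sum]
  congr 2
  refine Finset.sum_congr rfl fun i hi => ?_
  have hsplit : ((1 : R⟦X⟧) - X) ^ (n + 1) = (1 - X) ^ (i + 1) * (1 - X) ^ (n - i) := by
    rw [← pow_add]
    congr 1
    have := Finset.mem_range_succ_iff.mp hi
    omega
  rw [hA i, hsplit]
  ring

end Eulerian

theorem egf_eulerian_mul_one_sub_X_mul_egf {K : Type*} [Field K] [CharZero K]
    (A : ℕ → Polynomial K)
    (hA : ∀ n, (A n : K⟦X⟧) = (1 - X) ^ (n + 1) * mk (fun k => ((k : K) + 1) ^ n)) :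
    egf K A * (1 - C Polynomial.X * egf K (fun n => (1 - Polynomial.X) ^ n)) =
      (1 - C Polynomial.X) * egf K (fun n => (1 - Polynomial.X) ^ n) := by
  ext n : 1
  rw [mul_sub, mul_one, mul_left_comm, sub_mul, one_mul, map_sub, map_sub, coeff_C_mul,
    coeff_C_mul, coeff_egf_mul_egf, egf, egf, coeff_mk, coeff_mk, eulerian_recurrence A hA n]
  simp only [Polynomial.smul_eq_C_mul]
  ring

/-- In `ℂ[T][[z]]`: `(∑_{n≥1} A_n(T) z^n/n!) · (1 - T·e^{z(1-T)}) = e^{z(1-T)} - 1`,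
where `A_n` is the Eulerian polynomial and `e^{z(1-T)}` is the formal series
whose `z^n`-coefficient is `(1-T)^n/n!`. -/
theorem eulerian_genfun_substituted (A : ℕ → Polynomial ℂ)
    (hA : ∀ n, ((A n : PowerSeries ℂ)) =
      (1 - X) ^ (n + 1) * PowerSeries.mk (fun k => ((k : ℂ) + 1) ^ n)) :
    (PowerSeries.mk (fun n => if n = 0 then 0 else ((n.factorial : ℂ)⁻¹) • A n)
        : PowerSeries (Polynomial ℂ))
      * (1 - PowerSeries.C (Polynomial.X : Polynomial ℂ)
          * PowerSeries.mk (fun n => ((n.factorial : ℂ)⁻¹) • (1 - Polynomial.X) ^ n))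
    = PowerSeries.mk (fun n => ((n.factorial : ℂ)⁻¹) • (1 - Polynomial.X) ^ n) - 1 := by
  have hF : (mk (fun n => if n = 0 then 0 else ((n.factorial : ℂ)⁻¹) • A n)
      : PowerSeries (Polynomial ℂ)) = egf ℂ A - 1 := by
    ext (_ | n) : 1 <;> simp [egf, eulerian_zero A hA]
  have key := egf_eulerian_mul_one_sub_X_mul_egf A hA
  unfold egf at hF key
  rw [hF]
  linear_combination key
end

section
/- In ℂ[[z]]: 1 + ∑_{n≥1} (A_n(i)/(1+i)^{n-1}) · z^n/n! = sec z + tan z, where sec z + tan z denotes the formal Taylor series of that function. -/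
/-!
Comparing the defining series `A_n(t) = (1 - t)^{n+1} ∑_k (k+1)^n t^k` with the binomial
expansion of `k^n = ((k+1) - 1)^n` gives the recurrence
`t A_n(t) = ∑_p C(n,p) (t-1)^p A_{n-p}(t)` for `n ≥ 1`, which says that the exponential
generating function `F(z) = ∑ A_n(t) z^n/n!` satisfies `(t - e^{(t-1)z}) F(z) = t - 1`.
At `t = i`, substituting `z ↦ z/(1+i)` turns `e^{(i-1)z}` into `u = e^{iz}`; the left-hand side
of the theorem is `B = (1+i) F(z/(1+i)) - i`, so `(i - u) B = iu - 1`. By Euler's formulas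
`2 cos z = u + u⁻¹` and `2i sin z = u - u⁻¹`, `(1 + sin z)/cos z` solves the same equation,
and `i - u` is not a zero divisor.
-/

open Finset

namespace PowerSeries

theorem rescale_C {R : Type*} [CommSemiring R] (a c : R) : rescale a (C c) = C c := by
  ext (_ | n) <;> simp [coeff_rescale, coeff_C]

variable {R : Type*} [CommRing R]

theorem X_mul_mk_add_one_pow {n : ℕ} (hn : n ≠ 0) :
    X * mk (fun k => ((k : R) + 1) ^ n) = mk fun k => (k : R) ^ n := by
  ext (_ | k)
  · simp [zero_pow hn]
  · simp [coeff_succ_X_mul]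

theorem sum_antidiagonal_choose_mul_neg_one_pow_mul_mk (n : ℕ) :
    ∑ p ∈ antidiagonal n,
        (n.choose p.1 : R⟦X⟧) * (-1) ^ p.1 * mk (fun k => ((k : R) + 1) ^ p.2) =
      mk fun k => (k : R) ^ n := by
  ext k
  have h := (Commute.all (-1 : R) ((k : R) + 1)).add_pow' n
  rw [neg_add_cancel_comm_assoc] at h
  simp only [map_sum, coeff_mk, h, nsmul_eq_mul]
  refine sum_congr rfl fun p _ => ?_
  rw [show (n.choose p.1 : R⟦X⟧) * (-1) ^ p.1 = C ((n.choose p.1 : R) * (-1) ^ p.1) by simp,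
    coeff_C_mul, coeff_mk]
  ring

variable (R) in
noncomputable def eulerianSeries (n : ℕ) : R⟦X⟧ :=
  (1 - X) ^ (n + 1) * mk fun k => ((k : R) + 1) ^ n

theorem eulerianSeries_zero : eulerianSeries R 0 = 1 := by
  rw [eulerianSeries, zero_add, pow_one, mul_comm]
  simp only [pow_zero]
  exact mk_one_mul_one_sub_eq_one R

theorem X_mul_eulerianSeries {n : ℕ} (hn : n ≠ 0) :
    X * eulerianSeries R n =
      ∑ p ∈ antidiagonal n,
        (n.choose p.1 : R⟦X⟧) * (X - 1) ^ p.1 * eulerianSeries R p.2 := by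
  have hterm : ∀ p ∈ antidiagonal n,
      (n.choose p.1 : R⟦X⟧) * (X - 1) ^ p.1 * eulerianSeries R p.2 =
        (1 - X) ^ (n + 1) *
          ((n.choose p.1 : R⟦X⟧) * (-1) ^ p.1 * mk fun k => ((k : R) + 1) ^ p.2) := by
    intro p hp
    rw [HasAntidiagonal.mem_antidiagonal] at hp
    rw [eulerianSeries, ← neg_sub, neg_pow, ← hp, add_assoc, pow_add]
    ring
  rw [sum_congr rfl hterm, ← mul_sum, sum_antidiagonal_choose_mul_neg_one_pow_mul_mk,
    ← X_mul_mk_add_one_pow hn, eulerianSeries]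
  ring

end PowerSeries

namespace Polynomial

theorem eq_one_of_coe_eq_eulerianSeries_zero {R : Type*} [CommRing R] {A : R[X]}
    (hA : (A : PowerSeries R) = PowerSeries.eulerianSeries R 0) : A = 1 :=
  coe_eq_one_iff.mp (hA.trans PowerSeries.eulerianSeries_zero)

open PowerSeries in
theorem eval_mul_eq_sum_of_coe_eq_eulerianSeries {R : Type*} [CommRing R] {A : ℕ → R[X]}
    (hA : ∀ n, (A n : R⟦X⟧) = eulerianSeries R n) (t : R) {n : ℕ} (hn : n ≠ 0) :
    t * (A n).eval t = ∑ p ∈ antidiagonal n, n.choose p.1 * (t - 1) ^ p.1 * (A p.2).eval t := by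
  have h : X * A n = ∑ p ∈ antidiagonal n, (n.choose p.1 : R[X]) * (X - 1) ^ p.1 * A p.2 := by
    apply coe_injective R
    rw [coe_mul, coe_X, hA, X_mul_eulerianSeries hn, ← coeToPowerSeries.ringHom_apply, map_sum]
    refine sum_congr rfl fun p _ => ?_
    simp only [map_mul, map_pow, map_sub, map_one, map_natCast, coeToPowerSeries.ringHom_apply,
      coe_X, hA]
  simpa [eval_finsetSum] using congrArg (eval t) h

end Polynomial

namespace PowerSeries

open Nat

variable {K : Type*} [Field K] [CharZero K]

theorem coeff_mk_div_factorial_mul (a b : ℕ → K) (n : ℕ) :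
    coeff n ((mk fun k => a k / k !) * mk fun k => b k / k !) =
      (∑ p ∈ antidiagonal n, n.choose p.1 * a p.1 * b p.2) / n ! := by
  rw [coeff_mul, sum_div]
  refine sum_congr rfl fun p hp => ?_
  obtain ⟨i, j⟩ := p
  rw [HasAntidiagonal.mem_antidiagonal] at hp
  subst hp
  have h := Nat.add_choose_mul_factorial_mul_factorial i j
  rw [← Nat.choose_symm_add] at h
  simp only [coeff_mk]
  have hc : ((i + j).choose i : K) ≠ 0 := mod_cast (Nat.choose_pos (le_add_right i j)).ne'
  rw [← h]
  push_cast
  field_simp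

theorem coeff_rescale_exp (c : K) (n : ℕ) : coeff n (rescale c (exp K)) = c ^ n / n ! := by
  simp [coeff_rescale, div_eq_mul_inv]

theorem sub_rescale_exp_mul_mk_div_factorial {t : K} {a : ℕ → K} (h0 : a 0 = 1)
    (hrec : ∀ n ≠ 0, t * a n = ∑ p ∈ antidiagonal n, n.choose p.1 * (t - 1) ^ p.1 * a p.2) :
    (C t - rescale (t - 1) (exp K)) * (mk fun n => a n / n !) = C (t - 1) := by
  have hexp : rescale (t - 1) (exp K) = mk fun n => (t - 1) ^ n / n ! := by
    ext n; rw [coeff_rescale_exp, coeff_mk]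
  ext n
  rw [sub_mul, map_sub, coeff_C_mul, hexp, coeff_mk_div_factorial_mul, coeff_mk, coeff_C]
  rcases eq_or_ne n 0 with rfl | hn
  · simp [h0]
  · rw [if_neg hn, ← hrec n hn, mul_div_assoc, sub_self]

theorem sub_rescale_exp_mul_mk_eval_div_factorial {A : ℕ → Polynomial K}
    (hA : ∀ n, (A n : K⟦X⟧) = eulerianSeries K n) (t : K) :
    (C t - rescale (t - 1) (exp K)) * (mk fun n => (A n).eval t / n !) = C (t - 1) := by
  refine sub_rescale_exp_mul_mk_div_factorial ?_
    fun n hn => Polynomial.eval_mul_eq_sum_of_coe_eq_eulerianSeries hA t hn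
  rw [Polynomial.eq_one_of_coe_eq_eulerianSeries_zero (hA 0), Polynomial.eval_one]

variable {i : K}

theorem two_mul_cos_eq (hi : i ^ 2 = -1) :
    C 2 * cos K = rescale i (exp K) + rescale (-i) (exp K) := by
  ext n
  rw [map_add, coeff_C_mul, coeff_rescale_exp, coeff_rescale_exp, cos, coeff_mk]
  rcases Nat.even_or_odd' n with ⟨r, rfl | rfl⟩
  · rw [if_pos (even_two_mul r), Nat.mul_div_cancel_left r two_pos, Even.neg_pow (even_two_mul r),
      pow_mul, hi]
    simp only [map_div₀, map_pow, map_neg, map_one, map_natCast]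
    ring
  · rw [if_neg (Nat.not_even_two_mul_add_one r), Odd.neg_pow ⟨r, rfl⟩]
    ring

theorem two_mul_sin_eq (hi : i ^ 2 = -1) :
    C (2 * i) * sin K = rescale i (exp K) - rescale (-i) (exp K) := by
  ext n
  rw [map_sub, coeff_C_mul, coeff_rescale_exp, coeff_rescale_exp, sin, coeff_mk]
  rcases Nat.even_or_odd' n with ⟨r, rfl | rfl⟩
  · rw [if_pos (even_two_mul r), Even.neg_pow (even_two_mul r)]
    ring
  · rw [if_neg (Nat.not_even_two_mul_add_one r), Odd.neg_pow ⟨r, rfl⟩,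
      show (2 * r + 1) / 2 = r by omega]
    rw [pow_succ, pow_mul, hi]
    simp only [map_div₀, map_pow, map_neg, map_one, map_natCast]
    ring

theorem rescale_exp_mul_rescale_neg_exp (c : K) :
    rescale c (exp K) * rescale (-c) (exp K) = 1 := by
  simp [exp_mul_exp_eq_exp_add]

theorem sub_rescale_exp_mul_one_add_sin (hi : i ^ 2 = -1) :
    (C i - rescale i (exp K)) * (1 + sin K) = (C i * rescale i (exp K) - 1) * cos K := by
  have hcos := two_mul_cos_eq hi
  have hsin := two_mul_sin_eq hi
  have huv := rescale_exp_mul_rescale_neg_exp i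
  set u := rescale i (exp K)
  set v := rescale (-i) (exp K)
  have hCi : C i ^ 2 = -1 := by rw [← map_pow, hi, map_neg, map_one]
  have h2i : C (2 * i) ≠ 0 := by
    have hi0 : i ≠ 0 := by rintro rfl; norm_num at hi
    simp [hi0]
  apply mul_left_cancel₀ h2i
  rw [map_mul, map_ofNat] at hsin ⊢
  rw [map_ofNat] at hcos
  linear_combination (C i - u) * hsin - C i * (C i * u - 1) * hcos + (2 - u ^ 2 - u * v) * hCi +
    2 * huv

theorem sub_rescale_exp_mul_one_add_mk (hi : i ^ 2 = -1) {a : ℕ → K} (h0 : a 0 = 1)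
    (hegf : (C i - rescale (i - 1) (exp K)) * (mk fun n => a n / n !) = C (i - 1)) :
    (C i - rescale i (exp K)) *
        (1 + mk fun n => if n = 0 then 0 else a n / ((1 + i) ^ (n - 1) * n !)) =
      C i * rescale i (exp K) - 1 := by
  have h1i : 1 + i ≠ 0 := by
    intro h
    rw [eq_neg_of_add_eq_zero_right h] at hi
    norm_num at hi
  set G : K⟦X⟧ := mk fun n => (1 + i)⁻¹ ^ n * (a n / n !)
  -- substituting `z ↦ z / (1 + i)` turns `exp ((i - 1) z)` into `exp (i z)`
  have hG : (C i - rescale i (exp K)) * G = C (i - 1) := by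
    have h := congrArg (rescale (1 + i)⁻¹) hegf
    rwa [map_mul, map_sub, rescale_C, rescale_C, rescale_rescale, rescale_mk,
      show (i - 1) * (1 + i)⁻¹ = i by
        rw [mul_inv_eq_iff_eq_mul₀ h1i]; linear_combination (-1 : K) * hi] at h
  have hlhs : (1 + mk fun n => if n = 0 then 0 else a n / ((1 + i) ^ (n - 1) * n !)) =
      C (1 + i) * G - C i := by
    ext (_ | n)
    · simp [G, h0]
    · rw [map_add, map_sub, coeff_C_mul, coeff_one, coeff_C, coeff_mk, coeff_mk]
      simp only [if_neg n.succ_ne_zero, add_tsub_cancel_right, zero_add, sub_zero]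
      rw [inv_pow, pow_succ]
      field_simp
  rw [hlhs]
  simp only [map_add, map_sub, map_one] at hG ⊢
  linear_combination (1 + C i) * hG

theorem eq_one_add_sin_mul_inv_cos (hi : i ^ 2 = -1) {B : K⟦X⟧}
    (hB : (C i - rescale i (exp K)) * B = C i * rescale i (exp K) - 1) :
    B = (1 + sin K) * (cos K)⁻¹ := by
  have hne : C i - rescale i (exp K) ≠ 0 := by
    intro h
    have h0 := congrArg (coeff 0) h
    rw [map_sub, coeff_C, coeff_rescale_exp, if_pos rfl, pow_zero, factorial_zero, cast_one,
      div_one, map_zero, sub_eq_zero] at h0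
    rw [h0] at hi
    norm_num at hi
  have hcos : constantCoeff (cos K) ≠ 0 := by simp [cos]
  rw [eq_mul_inv_iff_mul_eq hcos]
  apply mul_left_cancel₀ hne
  rw [← mul_assoc, hB, sub_rescale_exp_mul_one_add_sin hi]

end PowerSeries

open PowerSeries Complex

/-- In `ℂ[[z]]`: `1 + ∑_{n≥1} (A_n(i)/(1+i)^{n-1}) z^n/n! = sec z + tan z`,
where `sec z + tan z` is the formal power series `(1 + sin z)/cos z`. -/
theorem eulerian_secant_tangent (A : ℕ → Polynomial ℂ)
    (hA : ∀ n, ((A n : PowerSeries ℂ)) =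
      (1 - X) ^ (n + 1) * PowerSeries.mk (fun k => ((k : ℂ) + 1) ^ n)) :
    1 + (PowerSeries.mk (fun n => if n = 0 then 0 else
        (A n).eval I / ((1 + I) ^ (n - 1) * n.factorial)) : PowerSeries ℂ)
    = (1 + PowerSeries.sin ℂ) * (PowerSeries.cos ℂ)⁻¹ := by
  have h0 : (A 0).eval I = 1 := by
    rw [Polynomial.eq_one_of_coe_eq_eulerianSeries_zero (hA 0), Polynomial.eval_one]
  exact eq_one_add_sin_mul_inv_cos I_sq <| sub_rescale_exp_mul_one_add_mk I_sq h0 <|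
    sub_rescale_exp_mul_mk_eval_div_factorial hA I
end

section
/- For s ≥ 2, define f_s(a) = ∑_{j≥0} (-1)^j C(s,j) max(a-2j,0)^{s-1} for integers a (with the convention c^{s-1} = 0 for c < 0). Then the generating function identity ∑_{a≥1} f_s(a) T^{a-1} = (1+T)^s · A_{s-1}(T) holds in ℤ[[T]]. -/
/-! Since `(1 + T)^s (1 - T)^s = (1 - T^2)^s = ∑_j (-1)^j C(s,j) T^{2j}` and
`A_{s-1}(T) / (1 - T)^s = ∑_k (k+1)^{s-1} T^k`, the right-hand side is
`∑_j (-1)^j C(s,j) T^{2j} ∑_k (k+1)^{s-1} T^k`, whose coefficient of `T^m` is `f_s(m+1)`. -/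

open PowerSeries

/-- `f_s(a) = ∑_j (-1)^j C(s,j) (a-2j)^{s-1}`, with the convention that terms with
negative base `a - 2j < 0` are `0`. -/
def fMonsky (s : ℕ) (a : ℤ) : ℤ :=
  ∑ j ∈ Finset.range (s + 1), (-1) ^ j * (s.choose j) * (max (a - 2 * j) 0) ^ (s - 1)

theorem one_sub_X_sq_pow_eq_sum {R : Type*} [CommRing R] (s : ℕ) :
    (1 - X ^ 2 : R⟦X⟧) ^ s =
      ∑ j ∈ Finset.range (s + 1), C ((-1) ^ j * (s.choose j : R)) * X ^ (2 * j) := by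
  rw [sub_eq_add_neg, add_comm, add_pow]
  refine Finset.sum_congr rfl fun j _ => ?_
  rw [neg_pow, one_pow, ← pow_mul, map_mul, map_pow, map_natCast, map_neg, map_one]
  ring

theorem X_pow_mul_mk_succ_pow (d : ℕ) {n : ℕ} (hn : n ≠ 0) :
    X ^ d * mk (fun k => ((k : ℤ) + 1) ^ n) = mk (fun m => max ((m : ℤ) + 1 - d) 0 ^ n) := by
  ext m
  rw [coeff_X_pow_mul', coeff_mk, coeff_mk]
  split_ifs with h
  · rw [max_eq_left (by omega), Nat.cast_sub h]
    ring
  · rw [max_eq_right (by omega), zero_pow hn]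

theorem mk_fMonsky_eq {s : ℕ} (hs : 2 ≤ s) :
    mk (fun m => fMonsky s ((m : ℤ) + 1)) =
      (1 - X ^ 2 : ℤ⟦X⟧) ^ s * mk (fun k => ((k : ℤ) + 1) ^ (s - 1)) := by
  rw [one_sub_X_sq_pow_eq_sum, Finset.sum_mul]
  ext m
  simp only [map_sum, mul_assoc, X_pow_mul_mk_succ_pow _ (by omega : s - 1 ≠ 0), coeff_C_mul,
    coeff_mk, fMonsky, Nat.cast_mul, Nat.cast_ofNat]

/-- For `s ≥ 2`, `∑_{a≥1} f_s(a) T^{a-1} = (1+T)^s · A_{s-1}(T)` in `ℤ[[T]]`, where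
`A_{s-1}` is the Eulerian polynomial. -/
theorem fMonsky_genfun (s : ℕ) (hs : 2 ≤ s) (A : Polynomial ℤ)
    (hA : (A : PowerSeries ℤ) =
      (1 - X) ^ (s - 1 + 1) * PowerSeries.mk (fun k => ((k : ℤ) + 1) ^ (s - 1))) :
    (PowerSeries.mk (fun m => fMonsky s ((m : ℤ) + 1)) : PowerSeries ℤ)
      = (1 + X) ^ s * (A : PowerSeries ℤ) := by
  rw [hA, Nat.sub_add_cancel (by omega : 1 ≤ s), mk_fMonsky_eq hs, ← mul_assoc, ← mul_pow]
  ring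
end

section
/- For s ≥ 2, with c = A_{s-1}(i)/(1+i)^{s-2}, the sum ∑ f_s(a), taken over all positive integers a with a ≡ s (mod 4), equals 2^{s-2}·(A_{s-1}(1) + c/2 + conj(c)/2). -/
open PowerSeries Complex

private lemma pow_mod4 {z : ℂ} (hz : z ^ 4 = 1) (k : ℕ) : z ^ k = z ^ (k % 4) := by
  conv_lhs => rw [← Nat.div_add_mod k 4]
  rw [pow_add, pow_mul, hz, one_pow, one_mul]

private lemma weight_lemma (n s : ℕ) (hs : 1 ≤ s) :
    (1 + (-1 : ℂ) ^ n * (-1) ^ (s - 1) + I ^ n * (-I) ^ (s - 1) + (-I) ^ n * I ^ (s - 1))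
      = if (n + 1) % 4 = s % 4 then 4 else 0 := by
  have hz1 : ((-1 : ℂ)) ^ 4 = 1 := by norm_num
  have hzi : (I : ℂ) ^ 4 = 1 := by
    rw [show (4 : ℕ) = 2 * 2 from rfl, pow_mul, Complex.I_sq]; norm_num
  have hzni : ((-I : ℂ)) ^ 4 = 1 := by rw [neg_pow, hzi]; norm_num
  rw [pow_mod4 hz1 n, pow_mod4 hz1 (s - 1), pow_mod4 hzi n, pow_mod4 hzi (s - 1),
    pow_mod4 hzni n, pow_mod4 hzni (s - 1)]
  simp only [show ((n + 1) % 4 = s % 4) = (n % 4 = (s - 1) % 4) from propext (by omega)]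
  have hp : n % 4 < 4 := Nat.mod_lt _ (by norm_num)
  have hq : (s - 1) % 4 < 4 := Nat.mod_lt _ (by norm_num)
  set p := n % 4 with hpd
  set q := (s - 1) % 4 with hqd
  clear_value p q
  interval_cases p <;> interval_cases q <;>
    norm_num [pow_succ, Complex.I_sq, Complex.ext_iff]

/-- For `s ≥ 2`, with `c = A_{s-1}(i)/(1+i)^{s-2}`, the sum of `f_s(a)` over all
positive `a ≡ s (mod 4)` equals `2^{s-2}·(A_{s-1}(1) + c/2 + c̄/2)`. -/
theorem fMonsky_sum_mod_four (s : ℕ) (hs : 2 ≤ s) (A : ℕ → Polynomial ℂ)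
    (hA : ∀ n, ((A n : PowerSeries ℂ)) =
      (1 - X) ^ (n + 1) * PowerSeries.mk (fun k => ((k : ℂ) + 1) ^ n)) :
    (∑ᶠ a ∈ {a : ℕ | 0 < a ∧ a % 4 = s % 4}, ((fMonsky s a : ℂ)))
      = 2 ^ (s - 2) * ((A (s - 1)).eval 1
          + ((A (s - 1)).eval I / (1 + I) ^ (s - 2)) / 2
          + (starRingEnd ℂ) ((A (s - 1)).eval I / (1 + I) ^ (s - 2)) / 2) := by
  obtain ⟨m, rfl⟩ : ∃ m, s = m + 2 := ⟨s - 2, by omega⟩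
  clear hs
  simp only [show m + 2 - 1 = m + 1 from rfl, show m + 2 - 2 = m from rfl]
  set g : ℕ → ℂ := fun k => ((k : ℂ) + 1) ^ (m + 1) with hg
  set F : Polynomial ℂ := (1 + Polynomial.X) ^ (m + 2) * A (m + 1) with hFdef
  have hFcoe : (F : PowerSeries ℂ) = (1 - X ^ 2) ^ (m + 2) * PowerSeries.mk g := by
    rw [hFdef, Polynomial.coe_mul, Polynomial.coe_pow, Polynomial.coe_add,
      Polynomial.coe_one, Polynomial.coe_X, hA (m + 1),
      show (1 - X ^ 2 : ℂ⟦X⟧) = (1 + X) * (1 - X) by ring, mul_pow, mul_assoc]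
  -- coefficients of F are the fMonsky values
  have hcoeff : ∀ n : ℕ, F.coeff n = (fMonsky (m + 2) ((n : ℤ) + 1) : ℂ) := by
    intro n
    rw [← Polynomial.coeff_coe, hFcoe, sub_eq_add_neg, add_comm (1 : ℂ⟦X⟧), add_pow,
      Finset.sum_mul, map_sum]
    simp only [fMonsky]
    push_cast
    apply Finset.sum_congr rfl
    intro j hj
    have hterm : (-(X ^ 2) : ℂ⟦X⟧) ^ j * 1 ^ (m + 2 - j) * ((m + 2).choose j : ℂ⟦X⟧)
        * PowerSeries.mk g
        = PowerSeries.C (R := ℂ) ((-1) ^ j * ((m + 2).choose j : ℂ)) * (X ^ (2 * j)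
            * PowerSeries.mk g) := by
      rw [map_mul (PowerSeries.C (R := ℂ)), map_pow, map_neg, map_one, map_natCast, one_pow,
        neg_pow, pow_mul]
      ring
    rw [hterm, PowerSeries.coeff_C_mul, PowerSeries.coeff_X_pow_mul']
    by_cases h2j : 2 * j ≤ n
    · rw [if_pos h2j, PowerSeries.coeff_mk]
      have hmax : max ((n : ℤ) + 1 - 2 * (j : ℤ)) 0 = ((n - 2 * j : ℕ) : ℤ) + 1 := by
        rw [max_eq_left (by omega)]; omega
      rw [hmax]
      simp only [hg]
      push_cast
      ring
    · rw [if_neg h2j]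
      have hmax : max ((n : ℤ) + 1 - 2 * (j : ℤ)) 0 = 0 := max_eq_right (by omega)
      rw [hmax]
      push_cast
      rw [zero_pow (by omega : m + 1 ≠ 0)]
  have hzero : (fMonsky (m + 2) ((0 : ℕ) : ℤ) : ℂ) = 0 := by
    have : fMonsky (m + 2) 0 = 0 := by
      apply Finset.sum_eq_zero
      intro j _
      have : max ((0 : ℤ) - 2 * j) 0 = 0 := max_eq_right (by omega)
      rw [this, zero_pow (by omega : m + 2 - 1 ≠ 0), mul_zero]
    simp [this]
  set M := F.natDegree + 1 with hM
  set f : ℕ → ℂ := fun a => (fMonsky (m + 2) a : ℂ) with hf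
  have hcoeff' : ∀ a : ℕ, 0 < a → f a = F.coeff (a - 1) := by
    intro a ha
    rw [hcoeff (a - 1), hf]
    congr 2
    push_cast
    omega
  have hfsupp : ∀ a, f a ≠ 0 → a < M + 1 := by
    intro a ha
    rcases Nat.eq_zero_or_pos a with rfl | hpos
    · exact absurd hzero ha
    · have := hcoeff' a hpos
      rw [this] at ha
      have := Polynomial.le_natDegree_of_ne_zero ha
      omega
  have hstep1 : (∑ᶠ a ∈ {a : ℕ | 0 < a ∧ a % 4 = (m + 2) % 4}, f a)
      = ∑ a ∈ (Finset.range (M + 1)).filter (fun a => 0 < a ∧ a % 4 = (m + 2) % 4), f a := by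
    apply finsum_mem_eq_sum_of_inter_support_eq
    ext a
    simp only [Set.mem_inter_iff, Set.mem_setOf_eq, Function.mem_support, Finset.coe_filter,
      Finset.mem_range]
    constructor
    · rintro ⟨hp, hne⟩
      exact ⟨⟨hfsupp a hne, hp⟩, hne⟩
    · tauto
  have heval : ∀ z : ℂ, F.eval z = ∑ a ∈ Finset.range (M + 1), f a * z ^ (a - 1) := by
    intro z
    rw [Polynomial.eval_eq_sum_range' (show F.natDegree < M by omega) z]
    conv_rhs => rw [Finset.sum_range_succ']
    have h0 : f 0 = 0 := hzero
    rw [h0, zero_mul, add_zero]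
    apply Finset.sum_congr rfl
    intro i _
    rw [hcoeff' (i + 1) (by omega)]
    simp
  have hweight : ∀ a ∈ Finset.range (M + 1),
      (if 0 < a ∧ a % 4 = (m + 2) % 4 then f a else 0)
        = f a * ((1 + (-1 : ℂ) ^ (a - 1) * (-1) ^ (m + 1) + I ^ (a - 1) * (-I) ^ (m + 1)
            + (-I) ^ (a - 1) * I ^ (m + 1)) / 4) := by
    intro a _
    rcases a with _ | n
    · rw [if_neg (by simp)]
      have h0 : f 0 = 0 := hzero
      rw [h0]
      ring
    · have hw := weight_lemma n (m + 2) (by omega)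
      rw [show m + 2 - 1 = m + 1 from rfl] at hw
      rw [show n + 1 - 1 = n from rfl, hw]
      by_cases h : (n + 1) % 4 = (m + 2) % 4
      · rw [if_pos h, if_pos ⟨by omega, h⟩]; ring
      · rw [if_neg h, if_neg (by tauto)]; ring
  have hsplit : ∑ a ∈ Finset.range (M + 1), f a * ((1 + (-1 : ℂ) ^ (a - 1) * (-1) ^ (m + 1)
        + I ^ (a - 1) * (-I) ^ (m + 1) + (-I) ^ (a - 1) * I ^ (m + 1)) / 4)
      = (F.eval 1 + (-1) ^ (m + 1) * F.eval (-1) + (-I) ^ (m + 1) * F.eval I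
          + I ^ (m + 1) * F.eval (-I)) / 4 := by
    rw [heval 1, heval (-1), heval I, heval (-I)]
    rw [Finset.mul_sum, Finset.mul_sum, Finset.mul_sum, ← Finset.sum_add_distrib,
      ← Finset.sum_add_distrib, ← Finset.sum_add_distrib, Finset.sum_div]
    apply Finset.sum_congr rfl
    intro a _
    ring
  have hE1 : F.eval 1 = 2 ^ (m + 2) * (A (m + 1)).eval 1 := by
    rw [hFdef]; simp; norm_num
  have hEm1 : F.eval (-1) = 0 := by
    rw [hFdef]; simp
  have hEI : F.eval I = (1 + I) ^ (m + 2) * (A (m + 1)).eval I := by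
    rw [hFdef]; simp
  have hEc : F.eval (-I) = (starRingEnd ℂ) (F.eval I) := by
    rw [heval I, heval (-I), map_sum]
    apply Finset.sum_congr rfl
    intro a _
    rw [map_mul, map_pow, Complex.conj_I, hf]
    simp
  rw [hstep1, Finset.sum_filter, Finset.sum_congr rfl hweight, hsplit, hE1, hEm1, hEI, hEc, hEI]
  set e1 := (A (m + 1)).eval 1
  set cI := (A (m + 1)).eval I
  have h1I : (1 + I : ℂ) ≠ 0 := by
    simp [Complex.ext_iff]
  have hkey2 : ((-I : ℂ)) * (1 + I) ^ 2 = 2 := by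
    linear_combination (-I - 2) * Complex.I_sq
  have hpow : ((-I : ℂ)) ^ (m + 1) * ((1 + I) ^ (m + 2) * (1 + I) ^ m) = 2 ^ (m + 1) := by
    rw [← pow_add, show m + 2 + m = 2 * (m + 1) by ring, pow_mul, ← mul_pow, hkey2]
  have key : ((-I : ℂ)) ^ (m + 1) * ((1 + I) ^ (m + 2) * cI) / 4
      = 2 ^ m * ((cI / (1 + I) ^ m) / 2) := by
    field_simp
    linear_combination 2 * cI * hpow
  have key2 : (I : ℂ) ^ (m + 1) * (starRingEnd ℂ) ((1 + I) ^ (m + 2) * cI) / 4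
      = 2 ^ m * ((starRingEnd ℂ) (cI / (1 + I) ^ m) / 2) := by
    have := congrArg (starRingEnd ℂ) key
    simpa [map_div₀, map_mul, map_pow, map_add, Complex.conj_I, map_ofNat] using this
  linear_combination key + key2
end

section
/- With D_p(k_1,...,k_s) the colength of (∑x_i, x_1^{k_1},...,x_s^{k_s}) in (ℤ/p)[x_1,...,x_s]: if u_1,...,u_s are all < p, then D_p(u_1+1, ..., u_s+1) - D_p(u_1,...,u_s) ≤ s·p^{s-2}. -/
open MvPolynomial

/-- `D_p(k_1,…,k_s)`: the `ℤ/p`-dimension (length) of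
`(ℤ/p)[x_1,…,x_s]/(∑ xᵢ, x_1^{k_1},…,x_s^{k_s})`. -/
noncomputable def Dlen (p s : ℕ) (k : Fin s → ℕ) : ℕ :=
  Module.finrank (ZMod p)
    (MvPolynomial (Fin s) (ZMod p) ⧸
      Ideal.span ({∑ i, (X i : MvPolynomial (Fin s) (ZMod p))} ∪
        Set.range fun i : Fin s => (X i : MvPolynomial (Fin s) (ZMod p)) ^ k i))

/-!
Write `I(k) = (∑ xᵢ, x_1^{k_1}, …, x_s^{k_s})` and raise one exponent: `k' = k + e_t`. Then
`I(k) = I(k') + (x_t^{k_t})`, and since `x_t^{k_t} · x_t ∈ I(k')`, multiplication by `x_t^{k_t}`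
maps `R/(I(k') + (x_t))` onto `I(k)/I(k')`. In `R/(I(k') + (x_t))` the variable `x_t` vanishes,
`∑ xᵢ = 0` eliminates a second one, and the remaining `s - 2` satisfy `x^p = 0` as long as
`k' ≤ p`; so this quotient is spanned by `p^(s-2)` monomials. Raising the exponents one
coordinate at a time gives the bound `s · p^(s-2)`.
-/

open Module

section Nilpotent

variable {R Q : Type*} [CommSemiring R] [CommSemiring Q] [Algebra R Q] {σ : Type*} [Fintype σ]
  {y : σ → Q} {p : ℕ}

theorem span_prod_pow_eq_top_of_pow_eq_zero (hy : Algebra.adjoin R (Set.range y) = ⊤)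
    (hp : ∀ j, y j ^ p = 0) :
    Submodule.span R (Set.range fun b : σ → Fin p => ∏ j, y j ^ (b j : ℕ)) = ⊤ := by
  rw [Algebra.adjoin_range_eq_range_aeval, AlgHom.range_eq_top] at hy
  refine eq_top_iff.2 fun q _ => ?_
  obtain ⟨f, rfl⟩ := hy q
  rw [f.as_sum, map_sum]
  refine Submodule.sum_mem _ fun a _ => ?_
  rw [aeval_monomial, Finsupp.prod_fintype _ _ fun _ => pow_zero _, ← Algebra.smul_def]
  by_cases ha : ∀ j, a j < p
  · exact Submodule.smul_mem _ _ (Submodule.subset_span ⟨fun j => ⟨a j, ha j⟩, rfl⟩)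
  · push Not at ha
    obtain ⟨j, hj⟩ := ha
    have hyj : y j ^ a j = 0 := pow_eq_zero_of_le hj (hp j)
    rw [Finset.prod_eq_zero (Finset.mem_univ j) hyj, smul_zero]
    exact Submodule.zero_mem _

theorem Module.Finite.of_adjoin_pow_eq_zero (hy : Algebra.adjoin R (Set.range y) = ⊤)
    (hp : ∀ j, y j ^ p = 0) : Module.Finite R Q :=
  ⟨span_prod_pow_eq_top_of_pow_eq_zero hy hp ▸ Submodule.fg_span (Set.finite_range _)⟩

theorem finrank_le_pow_card_of_adjoin_pow_eq_zero [StrongRankCondition R] [DecidableEq σ]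
    (hy : Algebra.adjoin R (Set.range y) = ⊤) (hp : ∀ j, y j ^ p = 0) :
    finrank R Q ≤ p ^ Fintype.card σ := by
  simpa using finrank_le_of_span_eq_top (span_prod_pow_eq_top_of_pow_eq_zero hy hp)

end Nilpotent

variable {K : Type*} [Field K]

theorem finrank_le_finrank_quotient_add_of_mul_eq_zero {Q : Type*} [CommRing Q] [Algebra K Q]
    [FiniteDimensional K Q] {f g : Q} (hfg : f * g = 0) :
    finrank K Q ≤ finrank K (Q ⧸ Ideal.span {f}) + finrank K (Q ⧸ Ideal.span {g}) := by
  have quot_add (a : Q) : finrank K (Q ⧸ Ideal.span {a}) +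
      finrank K ((Ideal.span {a}).restrictScalars K) = finrank K Q := by
    rw [← (Submodule.Quotient.restrictScalarsEquiv K (Ideal.span {a})).finrank_eq]
    exact Submodule.finrank_quotient_add_finrank _
  set μ := LinearMap.mulLeft K f
  have range_eq : LinearMap.range μ = (Ideal.span {f}).restrictScalars K := by
    ext x
    simp [μ, Ideal.mem_span_singleton', mul_comm]
  have span_le_ker : (Ideal.span {g}).restrictScalars K ≤ LinearMap.ker μ := by
    intro x hx
    obtain ⟨c, rfl⟩ := Ideal.mem_span_singleton'.1 hx
    simp [μ, mul_left_comm f, hfg]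
  have rank_nullity := LinearMap.finrank_range_add_finrank_ker μ
  rw [range_eq] at rank_nullity
  have := Submodule.finrank_mono span_le_ker
  have := quot_add f
  have := quot_add g
  omega

theorem finrank_quotient_le_of_mul_mem {A : Type*} [CommRing A] [Algebra K A] (J : Ideal A)
    [FiniteDimensional K (A ⧸ J)] {f g : A} (hfg : f * g ∈ J) :
    finrank K (A ⧸ J) ≤
      finrank K (A ⧸ J ⊔ Ideal.span {f}) + finrank K (A ⧸ J ⊔ Ideal.span {g}) := by
  have double_quot (a : A) : finrank K ((A ⧸ J) ⧸ Ideal.span {Ideal.Quotient.mkₐ K J a}) =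
      finrank K (A ⧸ J ⊔ Ideal.span {a}) := by
    rw [← Set.image_singleton, ← Ideal.map_span]
    exact (DoubleQuot.quotQuotEquivQuotSupₐ K J _).toLinearEquiv.finrank_eq
  rw [← double_quot, ← double_quot]
  exact finrank_le_finrank_quotient_add_of_mul_eq_zero
    (by rw [← map_mul]; exact Ideal.Quotient.eq_zero_iff_mem.2 hfg)

section SumPowIdeal

variable {σ : Type*}

theorem adjoin_range_mkₐ_X (J : Ideal (MvPolynomial σ K)) :
    Algebra.adjoin K (Set.range fun i => Ideal.Quotient.mkₐ K J (X i)) = ⊤ := by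
  change Algebra.adjoin K (Set.range (Ideal.Quotient.mkₐ K J ∘ X)) = ⊤
  rw [Set.range_comp, Algebra.adjoin_image, adjoin_range_X, Algebra.map_top, AlgHom.range_eq_top]
  exact Ideal.Quotient.mkₐ_surjective K J

variable [Fintype σ]

theorem finiteDimensional_quotient_of_X_pow_mem {J : Ideal (MvPolynomial σ K)} {p : ℕ}
    (hpow : ∀ i, X i ^ p ∈ J) : FiniteDimensional K (MvPolynomial σ K ⧸ J) :=
  .of_adjoin_pow_eq_zero (adjoin_range_mkₐ_X J) fun i => by
    rw [← map_pow, Ideal.Quotient.mkₐ_eq_mk, Ideal.Quotient.eq_zero_iff_mem]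
    exact hpow i

theorem finrank_quotient_le_pow_card_sub_two [DecidableEq σ] (hσ : 2 ≤ Fintype.card σ)
    {J : Ideal (MvPolynomial σ K)} {p : ℕ} (t : σ) (hXt : X t ∈ J) (hsum : ∑ i, X i ∈ J)
    (hpow : ∀ i, X i ^ p ∈ J) :
    finrank K (MvPolynomial σ K ⧸ J) ≤ p ^ (Fintype.card σ - 2) := by
  obtain ⟨i, hit⟩ := Fintype.exists_ne_of_one_lt_card hσ t
  set T := (Finset.univ.erase t).erase i
  have hT : Fintype.card T = Fintype.card σ - 2 := by
    rw [Fintype.card_coe, Finset.card_erase_of_mem (by simpa using hit),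
      Finset.card_erase_of_mem (Finset.mem_univ _), Finset.card_univ]
    omega
  let π := Ideal.Quotient.mkₐ K J
  have hπ {x : MvPolynomial σ K} (hx : x ∈ J) : π x = 0 := by
    rw [Ideal.Quotient.mkₐ_eq_mk, Ideal.Quotient.eq_zero_iff_mem]
    exact hx
  set B := Algebra.adjoin K (Set.range fun j : T => π (X j))
  have mem_of_ne {j : σ} (hji : j ≠ i) : π (X j) ∈ B := by
    rcases eq_or_ne j t with rfl | hjt
    · rw [hπ hXt]
      exact zero_mem B
    · exact Algebra.subset_adjoin ⟨⟨j, by simp [T, hji, hjt]⟩, rfl⟩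
  have mem_i : π (X i) ∈ B := by
    have : π (X i) = -∑ j ∈ Finset.univ.erase i, π (X j) := by
      rw [eq_neg_iff_add_eq_zero, Finset.add_sum_erase _ (fun j => π (X j)) (Finset.mem_univ i),
        ← map_sum, hπ hsum]
    rw [this]
    exact neg_mem (sum_mem fun j hj => mem_of_ne (Finset.ne_of_mem_erase hj))
  have hB : B = ⊤ := by
    rw [eq_top_iff, ← adjoin_range_mkₐ_X J, Algebra.adjoin_le_iff]
    rintro _ ⟨j, rfl⟩
    rcases eq_or_ne j i with rfl | hji
    exacts [mem_i, mem_of_ne hji]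
  rw [← hT]
  exact finrank_le_pow_card_of_adjoin_pow_eq_zero hB fun j => by rw [← map_pow, hπ (hpow j)]

noncomputable def sumPowIdeal (R : Type*) [CommSemiring R] (k : σ → ℕ) :
    Ideal (MvPolynomial σ R) :=
  Ideal.span ({∑ i, X i} ∪ Set.range fun i => X i ^ k i)

theorem sum_X_mem_sumPowIdeal (k : σ → ℕ) : ∑ i, X i ∈ sumPowIdeal K k :=
  Ideal.subset_span (Or.inl rfl)

theorem X_pow_mem_sumPowIdeal {k : σ → ℕ} {i : σ} {n : ℕ} (h : k i ≤ n) :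
    X i ^ n ∈ sumPowIdeal K k := by
  rw [← Nat.sub_add_cancel h, pow_add]
  exact Ideal.mul_mem_left _ _ (Ideal.subset_span (Or.inr ⟨i, rfl⟩))

theorem sumPowIdeal_update_succ_sup [DecidableEq σ] (k : σ → ℕ) (t : σ) :
    sumPowIdeal K (Function.update k t (k t + 1)) ⊔ Ideal.span {X t ^ k t} = sumPowIdeal K k := by
  apply le_antisymm
  · refine sup_le (Ideal.span_le.2 ?_) (Ideal.span_le.2 ?_)
    · rintro _ (rfl | ⟨i, rfl⟩)
      · exact sum_X_mem_sumPowIdeal k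
      · refine X_pow_mem_sumPowIdeal ?_
        rcases eq_or_ne i t with rfl | hi <;> simp [*]
    · rintro _ rfl
      exact X_pow_mem_sumPowIdeal le_rfl
  · refine Ideal.span_le.2 ?_
    rintro _ (rfl | ⟨i, rfl⟩)
    · exact Ideal.mem_sup_left (sum_X_mem_sumPowIdeal _)
    · rcases eq_or_ne i t with rfl | hi
      · exact Ideal.mem_sup_right (Ideal.mem_span_singleton_self _)
      · exact Ideal.mem_sup_left (X_pow_mem_sumPowIdeal (by simp [hi]))

theorem finrank_quotient_sumPowIdeal_update_succ_le [DecidableEq σ] (hσ : 2 ≤ Fintype.card σ)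
    {k : σ → ℕ} {p : ℕ} (hk : ∀ i, k i ≤ p) {t : σ} (ht : k t < p) :
    finrank K (MvPolynomial σ K ⧸ sumPowIdeal K (Function.update k t (k t + 1))) ≤
      finrank K (MvPolynomial σ K ⧸ sumPowIdeal K k) + p ^ (Fintype.card σ - 2) := by
  set I := sumPowIdeal K (Function.update k t (k t + 1))
  have hpow (i : σ) : X i ^ p ∈ I := by
    refine X_pow_mem_sumPowIdeal ?_
    rcases eq_or_ne i t with rfl | hi
    · simpa using ht
    · simpa [hi] using hk i
  have : FiniteDimensional K (MvPolynomial σ K ⧸ I) :=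
    finiteDimensional_quotient_of_X_pow_mem hpow
  have hmul : X t ^ k t * X t ∈ I := by
    rw [← pow_succ]
    exact X_pow_mem_sumPowIdeal (by simp)
  have hquot := finrank_quotient_le_of_mul_mem (K := K) I hmul
  rw [sumPowIdeal_update_succ_sup] at hquot
  refine hquot.trans (Nat.add_le_add_left ?_ _)
  exact finrank_quotient_le_pow_card_sub_two hσ t
    (Ideal.mem_sup_right (Ideal.mem_span_singleton_self _))
    (Ideal.mem_sup_left (sum_X_mem_sumPowIdeal _)) fun i => Ideal.mem_sup_left (hpow i)

end SumPowIdeal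

theorem Dlen_eq_finrank_quotient_sumPowIdeal (p s : ℕ) (k : Fin s → ℕ) :
    Dlen p s k = finrank (ZMod p) (MvPolynomial (Fin s) (ZMod p) ⧸ sumPowIdeal (ZMod p) k) :=
  rfl

theorem Dlen_update_succ_le {p s : ℕ} (hp : p.Prime) (hs : 2 ≤ s) {k : Fin s → ℕ}
    (hk : ∀ i, k i ≤ p) {t : Fin s} (ht : k t < p) :
    Dlen p s (Function.update k t (k t + 1)) ≤ Dlen p s k + p ^ (s - 2) := by
  have : Fact p.Prime := ⟨hp⟩
  simp only [Dlen_eq_finrank_quotient_sumPowIdeal]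
  simpa using finrank_quotient_sumPowIdeal_update_succ_le (K := ZMod p) (by simpa) hk ht

theorem Dlen_ite_mem_le {p s : ℕ} (hp : p.Prime) (hs : 2 ≤ s) {u : Fin s → ℕ}
    (hu : ∀ i, u i < p) (T : Finset (Fin s)) :
    Dlen p s (fun i => if i ∈ T then u i + 1 else u i) ≤ Dlen p s u + T.card * p ^ (s - 2) := by
  induction T using Finset.induction_on with
  | empty => simp
  | insert t T ht ih =>
    have hupd : (fun i => if i ∈ insert t T then u i + 1 else u i) =
        Function.update (fun i => if i ∈ T then u i + 1 else u i) t (u t + 1) := by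
      funext i
      rcases eq_or_ne i t with rfl | hi <;> simp [*]
    have step := Dlen_update_succ_le hp hs (k := fun i => if i ∈ T then u i + 1 else u i)
      (fun i => by have := hu i; split_ifs <;> omega) (t := t) (by simpa [ht] using hu t)
    simp only [ht, if_false] at step
    rw [hupd, Finset.card_insert_of_notMem ht, add_one_mul]
    linarith

/-- If `u_1,…,u_s < p`, then `D_p(u_1+1,…,u_s+1) - D_p(u_1,…,u_s) ≤ s·p^{s-2}`. -/
theorem Dlen_increment (p : ℕ) (hp : p.Prime) (s : ℕ) (hs : 2 ≤ s)
    (u : Fin s → ℕ) (hu : ∀ i, u i < p) :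
    (Dlen p s (fun i => u i + 1) : ℤ) - Dlen p s u ≤ s * p ^ (s - 2) := by
  have h := Dlen_ite_mem_le hp hs hu Finset.univ
  simp only [Finset.mem_univ, if_true, Finset.card_univ, Fintype.card_fin] at h
  have h' : (Dlen p s (fun i => u i + 1) : ℤ) ≤ Dlen p s u + s * p ^ (s - 2) := by
    exact_mod_cast h
  linarith
end
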